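/- arXiv:1501.05248 — 6 statements merged into one kernel-verified Lean document; each statement's English description precedes it below -/
import Mathlib

section
/- Let h(r) = -r^{-12} + 2r^{-6} and t(r) = (360/121)(11/5)^{1/6} r^{-1} - 25/11 for r > 0. Then t(r) > h(r) for 0 < r < (11/5)^{1/6} and t(r) < h(r) for r > (11/5)^{1/6}. -/
/-!
As functions of `1/r`, `t` is the tangent line to `h` at its inflection point `r = c`, where
`c = (11/5)^(1/6)`. In the variable `x = c / r`, using `c^6 = 11/5`, the difference `t r - h r` is
`5/121 * (5 x^12 - 22 x^6 + 72 x - 55)`, which has a triple root at `x = 1`: it is `(x - 1)^3`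
times a polynomial with positive coefficients, so its sign is that of `x - 1`.
-/

def tangentGap (x : ℝ) : ℝ := 5 * x ^ 12 - 22 * x ^ 6 + 72 * x - 55

lemma tangentGap_eq_mul (x : ℝ) :
    tangentGap x = (x - 1) ^ 3 * (5 * x ^ 9 + 15 * x ^ 8 + 30 * x ^ 7 + 50 * x ^ 6 + 75 * x ^ 5
      + 105 * x ^ 4 + 118 * x ^ 3 + 114 * x ^ 2 + 93 * x + 55) := by
  unfold tangentGap; ring

lemma tangentGap_pos_of_one_lt {x : ℝ} (hx : 1 < x) : 0 < tangentGap x := by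
  have hx0 : 0 < x := one_pos.trans hx
  rw [tangentGap_eq_mul]
  exact mul_pos (pow_pos (sub_pos.mpr hx) 3) (by positivity)

lemma tangentGap_neg_of_lt_one {x : ℝ} (hx0 : 0 ≤ x) (hx : x < 1) : tangentGap x < 0 := by
  rw [tangentGap_eq_mul]
  exact mul_neg_of_neg_of_pos (Odd.pow_neg (by decide) (sub_neg.mpr hx)) (by positivity)

lemma tangent_sub_eq_tangentGap {c : ℝ} (hc6 : c ^ 6 = 11 / 5) (r : ℝ) :
    (360 / 121 * c * r⁻¹ - 25 / 11) - (-r ^ (-12 : ℤ) + 2 * r ^ (-6 : ℤ))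
      = 5 / 121 * tangentGap (c / r) := by
  simp only [zpow_neg, zpow_ofNat, ← inv_pow, div_eq_mul_inv, tangentGap]
  linear_combination
    (-25 / 121 * r⁻¹ ^ 12 * (c ^ 6 + 11 / 5) + 10 / 11 * r⁻¹ ^ 6) * hc6

theorem stmt_4 (h t : ℝ → ℝ)
    (hh : ∀ r : ℝ, 0 < r → h r = -r ^ (-12 : ℤ) + 2 * r ^ (-6 : ℤ))
    (ht : ∀ r : ℝ, 0 < r → t r = (360/121) * (11/5 : ℝ) ^ ((1:ℝ)/6) * r⁻¹ - 25/11) :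
    (∀ r : ℝ, 0 < r → r < (11/5 : ℝ) ^ ((1:ℝ)/6) → h r < t r) ∧
    (∀ r : ℝ, (11/5 : ℝ) ^ ((1:ℝ)/6) < r → t r < h r) := by
  set c : ℝ := (11/5 : ℝ) ^ ((1:ℝ)/6) with hc_def
  have hc : 0 < c := Real.rpow_pos_of_pos (by norm_num) _
  have hc6 : c ^ 6 = 11 / 5 := by
    rw [hc_def, one_div]
    exact_mod_cast Real.rpow_inv_natCast_pow (x := 11 / 5) (n := 6) (by norm_num) (by norm_num)
  have key : ∀ r, 0 < r → t r - h r = 5 / 121 * tangentGap (c / r) := fun r hr => by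
    rw [ht r hr, hh r hr, tangent_sub_eq_tangentGap hc6]
  constructor
  · intro r hr hrc
    have := tangentGap_pos_of_one_lt ((one_lt_div hr).mpr hrc)
    linarith [key r hr]
  · intro r hrc
    have hr : 0 < r := hc.trans hrc
    have := tangentGap_neg_of_lt_one (div_pos hc hr).le ((div_lt_one hr).mpr hrc)
    linarith [key r hr]
end

section
/- Let q(r) = -(25/11) r^{12} + (360/121)(11/5)^{1/6} r^{11} - 2 r^{6} + 1. Then r₀ = (11/5)^{1/6} is a root of q of multiplicity at least 3, q(r) > 0 for 0 < r < r₀, and q(r) < 0 for r > r₀. -/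
/-!
With `a = (11/5)^(1/6)`, i.e. `a ^ 6 = 11/5`, the polynomial factors as `q r = (a - r)^3 * G r`,
where the cofactor `G` has only positive coefficients (as a polynomial in `r` and `a`). So `a` is
a triple root, and for `r > 0` the sign of `q r` is that of `a - r`.
-/

section TripleRoot

variable {g h : ℝ → ℝ} {a : ℝ}

theorem hasDerivAt_sub_pow_add_two_mul_self (n : ℕ) (hh : DifferentiableAt ℝ h a) :
    HasDerivAt (fun x => (a - x) ^ (n + 2) * h x) 0 a := by
  have hpow := ((hasDerivAt_id' a).const_sub a).fun_pow (n + 2)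
  exact (hpow.fun_mul hh.hasDerivAt).congr_deriv (by simp)

theorem deriv_sub_pow_three_mul (hg : Differentiable ℝ g) :
    deriv (fun x => (a - x) ^ 3 * g x) = fun x => (a - x) ^ 2 * ((a - x) * deriv g x - 3 * g x) := by
  funext x
  have hcube := ((hasDerivAt_id' x).const_sub a).fun_pow 3
  rw [(hcube.fun_mul (hg x).hasDerivAt).deriv]
  ring

theorem deriv_sub_pow_three_mul_self (hg : ContDiff ℝ 2 g) :
    deriv (fun x => (a - x) ^ 3 * g x) a = 0 ∧
      deriv (deriv fun x => (a - x) ^ 3 * g x) a = 0 := by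
  obtain ⟨hg_diff, -, hg'⟩ := (contDiff_succ_iff_deriv (n := 1)).mp hg
  refine ⟨(hasDerivAt_sub_pow_add_two_mul_self 1 (hg_diff a)).deriv, ?_⟩
  rw [deriv_sub_pow_three_mul hg_diff]
  refine (hasDerivAt_sub_pow_add_two_mul_self 0 ?_).deriv
  have hg'_diff : DifferentiableAt ℝ (deriv g) a := hg'.differentiable one_ne_zero a
  fun_prop

end TripleRoot

section LennardJones

variable {a : ℝ}

noncomputable def ljCofactor (a r : ℝ) : ℝ :=
  (25/11) * r^9 + (465/121) * a * r^8 + (570/121) * a^2 * r^7 + (590/121) * a^3 * r^6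
    + (525/121) * a^4 * r^5 + (375/121) * a^5 * r^4 + (50/11) * r^3 + (30/11) * a * r^2
    + (15/11) * a^2 * r + (5/11) * a^3

theorem contDiff_ljCofactor (n : WithTop ℕ∞) : ContDiff ℝ n (ljCofactor a) := by
  unfold ljCofactor
  fun_prop

theorem ljCofactor_pos (ha : 0 < a) {r : ℝ} (hr : 0 < r) : 0 < ljCofactor a r := by
  unfold ljCofactor
  positivity

theorem eq_sub_pow_three_mul_ljCofactor (ha : a ^ 6 = 11/5) (r : ℝ) :
    -(25/11) * r ^ 12 + (360/121) * a * r ^ 11 - 2 * r ^ 6 + 1 = (a - r) ^ 3 * ljCofactor a r := by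
  unfold ljCofactor
  linear_combination ((-5/11 : ℝ) - (375/121) * r^4 * a^2 + (600/121) * r^5 * a
    - (140/121) * r^6) * ha

theorem rpow_one_div_six_pow_six : ((11/5 : ℝ) ^ ((1:ℝ)/6)) ^ 6 = 11/5 := by
  rw [← Real.rpow_natCast, ← Real.rpow_mul (by norm_num)]
  norm_num

end LennardJones

theorem stmt_5 (q : ℝ → ℝ)
    (hq : ∀ r : ℝ, q r = -(25/11) * r ^ 12 + (360/121) * (11/5 : ℝ) ^ ((1:ℝ)/6) * r ^ 11
      - 2 * r ^ 6 + 1) :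
    q ((11/5 : ℝ) ^ ((1:ℝ)/6)) = 0 ∧
    deriv q ((11/5 : ℝ) ^ ((1:ℝ)/6)) = 0 ∧
    deriv (deriv q) ((11/5 : ℝ) ^ ((1:ℝ)/6)) = 0 ∧
    (∀ r : ℝ, 0 < r → r < (11/5 : ℝ) ^ ((1:ℝ)/6) → 0 < q r) ∧
    (∀ r : ℝ, (11/5 : ℝ) ^ ((1:ℝ)/6) < r → q r < 0) := by
  set a : ℝ := (11/5 : ℝ) ^ ((1:ℝ)/6)
  have ha_pos : 0 < a := by positivity
  have hq_eq : q = fun r => (a - r) ^ 3 * ljCofactor a r :=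
    funext fun r => (hq r).trans (eq_sub_pow_three_mul_ljCofactor rpow_one_div_six_pow_six r)
  subst hq_eq
  obtain ⟨hd1, hd2⟩ := deriv_sub_pow_three_mul_self (a := a) (contDiff_ljCofactor 2)
  refine ⟨by simp, hd1, hd2, fun r hr hra => ?_, fun r har => ?_⟩
  · exact mul_pos (pow_pos (sub_pos.mpr hra) 3) (ljCofactor_pos ha_pos hr)
  · exact mul_neg_of_neg_of_pos (Odd.pow_neg (by decide) (sub_neg.mpr har))
      (ljCofactor_pos ha_pos (ha_pos.trans har))
end

section
/- With θ as defined (θ(r) = (360/121)(11/5)^{1/6} r^{-1} - 25/11 for 0 < r ≤ (11/5)^{1/6}, and θ(r) = -r^{-12} + 2r^{-6} for r > (11/5)^{1/6}), and h̃(r) = 1 for 0 < r ≤ 1 and h̃(r) = -r^{-12} + 2r^{-6} for r > 1, one has h̃(r) ≤ θ(r) for all r > 0. -/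
/-! With `c = (11/5)^(1/6)` (so `c⁶ = 11/5`) the two functions agree for `r > c`. For
`1 < r ≤ c` the substitution `u = c / r ≥ 1` turns `h̃ ≤ θ` into the polynomial inequality
`25 u¹² - 110 u⁶ + 360 u - 275 ≥ 0`, whose left side is `(u - 1)³` times a polynomial with
positive coefficients. For `r ≤ 1` it suffices that `c ≥ 11/10`. -/

lemma lj_poly_le_of_one_le {u : ℝ} (hu : 1 ≤ u) :
    -(25 / 121) * u ^ 12 + 10 / 11 * u ^ 6 ≤ 360 / 121 * u - 25 / 11 := by
  have hfactor : 25 * u ^ 12 - 110 * u ^ 6 + 360 * u - 275 =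
      (u - 1) ^ 3 * (275 + 465 * u + 570 * u ^ 2 + 590 * u ^ 3 + 525 * u ^ 4 + 375 * u ^ 5
        + 250 * u ^ 6 + 150 * u ^ 7 + 75 * u ^ 8 + 25 * u ^ 9) := by ring
  have hnonneg : 0 ≤ 25 * u ^ 12 - 110 * u ^ 6 + 360 * u - 275 := by
    rw [hfactor]
    have : 0 ≤ u := by linarith
    exact mul_nonneg (pow_nonneg (by linarith) 3) (by positivity)
  linarith

lemma lj_le_of_le_of_pow_six_eq {c r : ℝ} (hc : c ^ 6 = 11 / 5) (hr : 0 < r) (hrc : r ≤ c) :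
    -r ^ (-12 : ℤ) + 2 * r ^ (-6 : ℤ) ≤ 360 / 121 * c * r⁻¹ - 25 / 11 := by
  have hu : 1 ≤ c * r⁻¹ := by rwa [← div_eq_mul_inv, le_div_iff₀ hr, one_mul]
  have h6 : r ^ (-6 : ℤ) = 5 / 11 * (c * r⁻¹) ^ 6 := by
    rw [mul_pow, hc, inv_pow, zpow_neg, zpow_ofNat]; ring
  have h12 : r ^ (-12 : ℤ) = 25 / 121 * (c * r⁻¹) ^ 12 := by
    rw [show (-12 : ℤ) = -6 * 2 by norm_num, zpow_mul, h6]; norm_num; ring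
  rw [h6, h12, mul_assoc]
  linarith [lj_poly_le_of_one_le hu]

theorem stmt_10 (θ htilde : ℝ → ℝ)
    (hθ₁ : ∀ r : ℝ, 0 < r → r ≤ (11/5 : ℝ) ^ ((1:ℝ)/6) →
      θ r = (360/121) * (11/5 : ℝ) ^ ((1:ℝ)/6) * r⁻¹ - 25/11)
    (hθ₂ : ∀ r : ℝ, (11/5 : ℝ) ^ ((1:ℝ)/6) < r → θ r = -r ^ (-12 : ℤ) + 2 * r ^ (-6 : ℤ))
    (hh₁ : ∀ r : ℝ, 0 < r → r ≤ 1 → htilde r = 1)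
    (hh₂ : ∀ r : ℝ, 1 < r → htilde r = -r ^ (-12 : ℤ) + 2 * r ^ (-6 : ℤ)) :
    ∀ r : ℝ, 0 < r → htilde r ≤ θ r := by
  intro r hr
  set c : ℝ := (11/5 : ℝ) ^ ((1:ℝ)/6)
  have hc6 : c ^ 6 = 11 / 5 := by
    rw [show c = (11 / 5 : ℝ) ^ ((6 : ℕ)⁻¹ : ℝ) by norm_num [c]]
    exact Real.rpow_inv_natCast_pow (by norm_num) (by norm_num)
  have hc : 11 / 10 < c := lt_of_pow_lt_pow_left₀ 6 (by positivity) (by rw [hc6]; norm_num)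
  rcases le_or_gt r c with hrc | hcr
  · rw [hθ₁ r hr hrc]
    rcases le_or_gt r 1 with hr1 | hr1
    · rw [hh₁ r hr hr1]
      have hinv : 1 ≤ r⁻¹ := (one_le_inv₀ hr).mpr hr1
      nlinarith [mul_le_mul hc.le hinv zero_le_one (by positivity)]
    · rw [hh₂ r hr1]
      exact lj_le_of_le_of_pow_six_eq hc6 hr hrc
  · rw [hθ₂ r hcr, hh₂ r (by linarith)]
end

section
/- The integral ∫_{0.64}^{∞} θ(r) r² dr, with θ(r) = (360/121)(11/5)^{1/6} r^{-1} - 25/11 for 0.64 < r ≤ (11/5)^{1/6} and θ(r) = -r^{-12} + 2r^{-6} for r > (11/5)^{1/6}, satisfies 24 ∫_{0.64}^{∞} θ(r) r² dr < 24.05. -/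
/-!
Split the integral at `σ = (11/5)^(1/6)`. On `(0.64, σ]` the factor `r⁻¹` cancels against `r²`, so
the integrand is the polynomial `k r - m r²`; on `(σ, ∞)` it is `-r⁻¹⁰ + 2 r⁻⁴`, whose integral is
`-σ⁻⁹/9 + 2σ⁻³/3`. Since `σ⁶ = 11/5`, both negative powers are multiples of `σ³ = √(11/5)`, and
the resulting closed form is about `24.046`.
-/

open MeasureTheory Set

theorem integrableOn_Ioi_zpow_of_lt {n : ℤ} (hn : n < -1) {c : ℝ} (hc : 0 < c) :
    IntegrableOn (fun t : ℝ ↦ t ^ n) (Ioi c) := by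
  simpa only [Real.rpow_intCast] using
    integrableOn_Ioi_rpow_of_lt (a := (n : ℝ)) (by exact_mod_cast hn) hc

theorem integral_Ioi_zpow_of_lt {n : ℤ} (hn : n < -1) {c : ℝ} (hc : 0 < c) :
    ∫ t in Ioi c, t ^ n = -c ^ (n + 1) / (n + 1) := by
  have h := integral_Ioi_rpow_of_lt (a := (n : ℝ)) (by exact_mod_cast hn) hc
  rw [← Int.cast_one, ← Int.cast_add, Real.rpow_intCast] at h
  simpa only [Real.rpow_intCast, Int.cast_add, Int.cast_one] using h

section LennardJonesTail

variable {c : ℝ}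

theorem lennardJones_mul_sq {r : ℝ} (hr : r ≠ 0) :
    (-r ^ (-12 : ℤ) + 2 * r ^ (-6 : ℤ)) * r ^ 2 = -r ^ (-10 : ℤ) + 2 * r ^ (-4 : ℤ) := by
  have h (n : ℤ) : r ^ n * r ^ 2 = r ^ (n + 2) := by
    rw [zpow_add₀ hr, zpow_ofNat]
  rw [add_mul, neg_mul, mul_assoc, h, h]
  norm_num

theorem integrableOn_Ioi_lennardJones_mul_sq (hc : 0 < c) :
    IntegrableOn (fun r : ℝ ↦ (-r ^ (-12 : ℤ) + 2 * r ^ (-6 : ℤ)) * r ^ 2) (Ioi c) := by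
  refine IntegrableOn.congr_fun ?_ (fun r hr ↦ (lennardJones_mul_sq (hc.trans hr).ne').symm)
    measurableSet_Ioi
  exact (integrableOn_Ioi_zpow_of_lt (by norm_num) hc).neg.add
    ((integrableOn_Ioi_zpow_of_lt (by norm_num) hc).const_mul 2)

theorem integral_Ioi_lennardJones_mul_sq (hc : 0 < c) :
    ∫ r in Ioi c, (-r ^ (-12 : ℤ) + 2 * r ^ (-6 : ℤ)) * r ^ 2
      = -c ^ (-9 : ℤ) / 9 + 2 * c ^ (-3 : ℤ) / 3 := by
  rw [setIntegral_congr_fun measurableSet_Ioi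
      (fun r hr ↦ lennardJones_mul_sq (hc.trans hr).ne'),
    integral_add (f := fun r ↦ -r ^ (-10 : ℤ))
      (integrableOn_Ioi_zpow_of_lt (by norm_num) hc).neg
      ((integrableOn_Ioi_zpow_of_lt (by norm_num) hc).const_mul 2),
    integral_neg, integral_const_mul, integral_Ioi_zpow_of_lt (by norm_num) hc,
    integral_Ioi_zpow_of_lt (by norm_num) hc]
  norm_num
  ring

end LennardJonesTail

theorem integral_inv_sub_mul_sq {c d : ℝ} (hc : 0 < c) (hd : 0 < d) (k m : ℝ) :
    ∫ r in c..d, (k * r⁻¹ - m) * r ^ 2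
      = k * ((d ^ 2 - c ^ 2) / 2) - m * ((d ^ 3 - c ^ 3) / 3) := by
  have hpos : ∀ r ∈ uIcc c d, r ≠ 0 := fun r hr ↦ ((lt_min hc hd).trans_le hr.1).ne'
  rw [intervalIntegral.integral_congr (g := fun r ↦ k * r - m * r ^ 2) fun r hr ↦ by
      simp only; field_simp [hpos r hr]]
  rw [intervalIntegral.integral_sub, intervalIntegral.integral_const_mul,
    intervalIntegral.integral_const_mul, integral_id, integral_pow]
  · norm_num
  all_goals exact Continuous.intervalIntegrable (by fun_prop) _ _

theorem closedForm_lt_of_pow_six_eq {a : ℝ} (ha : 0 < a) (ha6 : a ^ 6 = 11 / 5) :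
    24 * ((360 / 121) * a * ((a ^ 2 - 0.64 ^ 2) / 2) - 25 / 11 * ((a ^ 3 - 0.64 ^ 3) / 3)
      + (-a ^ (-9 : ℤ) / 9 + 2 * a ^ (-3 : ℤ) / 3)) < 24.05 := by
  -- The closed form is `(100/99) a³ - (180·0.64²/121) a + (25/33)·0.64³`: an upper bound on
  -- `a³` and a lower bound on `a` suffice.
  have ht : (a ^ 3) ^ 2 = 11 / 5 := by rw [← pow_mul]; exact ha6
  have ht_lt : a ^ 3 < 1.48328 := by nlinarith [pow_pos ha 3]
  have ha_gt : 1.14043 < a := by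
    by_contra! h
    have := pow_le_pow_left₀ ha.le h 6
    norm_num [ha6] at this
  have h3 : a ^ (-3 : ℤ) = 5 * a ^ 3 / 11 := by
    rw [zpow_neg, zpow_ofNat]; field_simp; linarith
  have h9 : a ^ (-9 : ℤ) = 25 * a ^ 3 / 121 := by
    rw [show (-9 : ℤ) = (-3) * 3 by norm_num, zpow_mul, h3, zpow_ofNat]
    linear_combination (125 * a ^ 3 / 1331) * ht
  rw [h3, h9]
  linarith

theorem stmt_13 (θ : ℝ → ℝ)
    (hθ₁ : ∀ r : ℝ, 0 < r → r ≤ (11/5 : ℝ) ^ ((1:ℝ)/6) →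
      θ r = (360/121) * (11/5 : ℝ) ^ ((1:ℝ)/6) * r⁻¹ - 25/11)
    (hθ₂ : ∀ r : ℝ, (11/5 : ℝ) ^ ((1:ℝ)/6) < r → θ r = -r ^ (-12 : ℤ) + 2 * r ^ (-6 : ℤ)) :
    24 * ∫ r in Set.Ioi (0.64 : ℝ), θ r * r ^ 2 < 24.05 := by
  set a := (11/5 : ℝ) ^ ((1:ℝ)/6) with ha_def
  have ha : 0 < a := by positivity
  have ha6 : a ^ 6 = 11 / 5 := by
    rw [ha_def, one_div]
    exact_mod_cast Real.rpow_inv_natCast_pow (x := 11 / 5) (n := 6) (by norm_num) (by norm_num)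
  have hca : (0.64 : ℝ) ≤ a := by
    by_contra! h
    have := pow_le_pow_left₀ ha.le h.le 6
    norm_num [ha6] at this
  have hcore_mem : ∀ r ∈ uIcc (0.64 : ℝ) a, 0 < r ∧ r ≤ a := fun r hr ↦ by
    rw [uIcc_of_le hca] at hr
    exact ⟨by linarith [hr.1], hr.2⟩
  have hcore : EqOn (fun r ↦ θ r * r ^ 2) (fun r ↦ ((360/121) * a * r⁻¹ - 25/11) * r ^ 2)
      (uIcc 0.64 a) := fun r hr ↦ by
    simp only [hθ₁ r (hcore_mem r hr).1 (hcore_mem r hr).2]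
  have htail : EqOn (fun r ↦ θ r * r ^ 2) (fun r ↦ (-r ^ (-12 : ℤ) + 2 * r ^ (-6 : ℤ)) * r ^ 2)
      (Ioi a) := fun r hr ↦ by simp only [hθ₂ r hr]
  have hcore_cont : ContinuousOn (fun r ↦ θ r * r ^ 2) (uIcc 0.64 a) :=
    ContinuousOn.congr (by fun_prop (disch := exact fun r hr ↦ (hcore_mem r hr).1.ne')) hcore
  rw [← intervalIntegral.integral_interval_add_Ioi' hcore_cont.intervalIntegrable
      ((integrableOn_Ioi_lennardJones_mul_sq ha).congr_fun htail.symm measurableSet_Ioi),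
    intervalIntegral.integral_congr hcore, setIntegral_congr_fun measurableSet_Ioi htail,
    integral_inv_sub_mul_sq (by norm_num) ha, integral_Ioi_lennardJones_mul_sq ha]
  exact closedForm_lt_of_pow_six_eq ha ha6
end

section
/- Let h(d) = -d^{-12} + 2d^{-6}. Then for all 0 < d ≤ 0.98, (113/2) (1/0.98³) (0.98 - d)² (d + 1.96) + 2(h(d) - 1) < 0. -/
/-!
With `x = d⁻⁶` the energy term is `2 (h d - 1) = -2 (x - 1)²`. For `d ≤ 0.98` the polynomial
bound `x - 1 > 9.4 (0.98 - d)` makes this at most `-2 · 9.4² (0.98 - d)²`, while the volume term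
is at most `(113/2) · 2.94 / 0.98³ · (0.98 - d)² < 2 · 9.4² (0.98 - d)²`.
-/

lemma neg_zpow_twelve_add_two_mul_zpow_six_sub_one (d : ℝ) :
    -d ^ (-12 : ℤ) + 2 * d ^ (-6 : ℤ) - 1 = -((d ^ 6)⁻¹ - 1) ^ 2 := by
  have h12 : d ^ (-12 : ℤ) = ((d ^ 6)⁻¹) ^ 2 := by
    rw [← zpow_natCast, ← zpow_natCast, ← zpow_neg, ← zpow_mul]; norm_num
  have h6 : d ^ (-6 : ℤ) = (d ^ 6)⁻¹ := by
    rw [← zpow_natCast, ← zpow_neg]; norm_num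
  rw [h12, h6]
  ring

lemma mul_pow_six_lt_one_sub_pow_six {d : ℝ} (hd : 0 < d) :
    47 / 5 * (0.98 - d) * d ^ 6 < 1 - d ^ 6 := by
  nlinarith [sq_nonneg (d - 0.94), sq_nonneg (d ^ 2 - 0.88), sq_nonneg (d ^ 3 - 0.83),
    pow_pos hd 3, pow_pos hd 6, sq_nonneg (d ^ 3 - 0.94 * d ^ 2), sq_nonneg (d ^ 3 * (d - 0.94))]

lemma mul_lt_inv_pow_six_sub_one {d : ℝ} (hd : 0 < d) :
    47 / 5 * (0.98 - d) < (d ^ 6)⁻¹ - 1 := by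
  have hd6 : 0 < d ^ 6 := by positivity
  rw [← one_div, div_sub_one hd6.ne', lt_div_iff₀ hd6]
  exact mul_pow_six_lt_one_sub_pow_six hd

lemma intersection_volume_term_le {d : ℝ} (hle : d ≤ 0.98) :
    (113 / 2) * (1 / (0.98 : ℝ) ^ 3) * (0.98 - d) ^ 2 * (d + 1.96)
      ≤ 2 * (47 / 5 * (0.98 - d)) ^ 2 := by
  have hsq : 0 ≤ (0.98 - d) ^ 2 := sq_nonneg _
  nlinarith [mul_le_mul_of_nonneg_left hle hsq]

theorem stmt_17 (h : ℝ → ℝ)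
    (hh : ∀ d : ℝ, 0 < d → h d = -d ^ (-12 : ℤ) + 2 * d ^ (-6 : ℤ)) :
    ∀ d : ℝ, 0 < d → d ≤ 0.98 →
      (113 / 2) * (1 / (0.98 : ℝ) ^ 3) * (0.98 - d) ^ 2 * (d + 1.96) + 2 * (h d - 1) < 0 := by
  intro d hd hle
  have henergy : h d - 1 = -((d ^ 6)⁻¹ - 1) ^ 2 := by
    rw [hh d hd, neg_zpow_twelve_add_two_mul_zpow_six_sub_one]
  have hsq : (47 / 5 * (0.98 - d)) ^ 2 < ((d ^ 6)⁻¹ - 1) ^ 2 :=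
    pow_lt_pow_left₀ (mul_lt_inv_pow_six_sub_one hd) (by linarith) two_ne_zero
  rw [henergy]
  linarith [intersection_volume_term_le hle]
end

section
/- Let P(d) = c₁ d^{15} + c₂ d^{13} + 111 d^{12} + 4 d⁶ - 2 with c₁ = 113/(2·0.98³) and c₂ = -8475/49. Then P(d) < 0 for all 0 < d ≤ 0.98. -/
/-!
Multiplying out, `P d = c₁ d¹² (0.98 - d)² (d + 1.96) - 2 (d⁶ - 1)²`, so `P 0.98 = -2 (1 - 0.98⁶)² < 0`.
Moreover `P' d = d⁵ R d` with `R d = 15 c₁ d⁹ + 13 c₂ d⁷ + 1332 d⁶ + 24`, and `R` is positive on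
`[0, 0.98]`, so `P` increases there and stays below `P 0.98`.
-/

open Set

def polyP (c₁ c₂ d : ℝ) : ℝ := c₁ * d ^ 15 + c₂ * d ^ 13 + 111 * d ^ 12 + 4 * d ^ 6 - 2

def polyR (c₁ c₂ d : ℝ) : ℝ := 15 * c₁ * d ^ 9 + 13 * c₂ * d ^ 7 + 1332 * d ^ 6 + 24

theorem hasDerivAt_polyP (c₁ c₂ d : ℝ) : HasDerivAt (polyP c₁ c₂) (d ^ 5 * polyR c₁ c₂ d) d := by
  have h := (((((hasDerivAt_pow 15 d).const_mul c₁).add ((hasDerivAt_pow 13 d).const_mul c₂)).add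
    ((hasDerivAt_pow 12 d).const_mul 111)).add ((hasDerivAt_pow 6 d).const_mul 4)).sub_const 2
  refine h.congr_deriv ?_
  norm_num [polyR]
  ring

/- The hints are the degree-9 Bernstein basis of the interval: the Bernstein coefficients of `polyR`
on `[0, 0.93]` and on `[0.93, 0.98]` are all positive (its minimum, about 0.45, lies near 0.952),
so `polyR` is a nonnegative combination of them plus a positive constant. -/
theorem polyR_pos_of_le {d : ℝ} (h₀ : 0 ≤ d) (h₁ : d ≤ 0.93) :
    0 < polyR (113 / (2 * 0.98 ^ 3)) (-8475 / 49) d := by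
  have hb : 0 ≤ 0.93 - d := by linarith
  have bern (i j : ℕ) : 0 ≤ d ^ i * (0.93 - d) ^ j := mul_nonneg (pow_nonneg h₀ i) (pow_nonneg hb j)
  unfold polyR
  nlinarith [bern 9 0, bern 8 1, bern 7 2, bern 6 3, bern 5 4, bern 4 5, bern 3 6, bern 2 7,
    bern 1 8, bern 0 9]

theorem polyR_pos_of_ge {d : ℝ} (h₀ : 0.93 ≤ d) (h₁ : d ≤ 0.98) :
    0 < polyR (113 / (2 * 0.98 ^ 3)) (-8475 / 49) d := by
  have ha : 0 ≤ d - 0.93 := by linarith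
  have hb : 0 ≤ 0.98 - d := by linarith
  have bern (i j : ℕ) : 0 ≤ (d - 0.93) ^ i * (0.98 - d) ^ j :=
    mul_nonneg (pow_nonneg ha i) (pow_nonneg hb j)
  unfold polyR
  nlinarith [bern 9 0, bern 8 1, bern 7 2, bern 6 3, bern 5 4, bern 4 5, bern 3 6, bern 2 7,
    bern 1 8, bern 0 9]

theorem monotoneOn_polyP :
    MonotoneOn (polyP (113 / (2 * 0.98 ^ 3)) (-8475 / 49)) (Icc 0 0.98) := by
  refine monotoneOn_of_hasDerivWithinAt_nonneg (convex_Icc 0 0.98)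
    (fun d _ => (hasDerivAt_polyP _ _ d).continuousAt.continuousWithinAt)
    (fun d _ => (hasDerivAt_polyP _ _ d).hasDerivWithinAt) ?_
  rw [interior_Icc]
  rintro d ⟨h₀, h₁⟩
  refine mul_nonneg (pow_nonneg h₀.le 5) (le_of_lt ?_)
  rcases le_total d 0.93 with h | h
  · exact polyR_pos_of_le h₀.le h
  · exact polyR_pos_of_ge h h₁.le

theorem polyP_098_neg : polyP (113 / (2 * 0.98 ^ 3)) (-8475 / 49) 0.98 < 0 := by
  norm_num [polyP]

theorem stmt_18 (c₁ c₂ : ℝ) (hc₁ : c₁ = 113 / (2 * (0.98 : ℝ) ^ 3)) (hc₂ : c₂ = -8475 / 49)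
    (P : ℝ → ℝ)
    (hP : ∀ d : ℝ, P d = c₁ * d ^ 15 + c₂ * d ^ 13 + 111 * d ^ 12 + 4 * d ^ 6 - 2) :
    ∀ d : ℝ, 0 < d → d ≤ 0.98 → P d < 0 := by
  intro d h₀ h₁
  subst hc₁ hc₂
  obtain rfl : P = polyP _ _ := funext hP
  calc _ ≤ polyP _ _ 0.98 := monotoneOn_polyP ⟨h₀.le, h₁⟩ ⟨by norm_num, le_rfl⟩ h₁
    _ < 0 := polyP_098_neg
end
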